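/- arXiv:2304.00849 — 5 statements merged into one kernel-verified Lean document; each statement's English description precedes it below -/
import Mathlib

section
/- If G is a connected graph with maximum degree Δ, then every k-antiresolving set of G satisfies k ≤ Δ; in particular, G is κ-metric antidimensional for some κ ≤ Δ. -/
open SimpleGraph

/-- Two vertices have the same distances to every vertex of `S`. -/
def sameDists {V : Type*} (G : SimpleGraph V) (S : Set V) (x y : V) : Prop :=
  ∀ z ∈ S, G.dist x z = G.dist y z

/-- The equivalence class (outside `S`) of `x` under the equal-distance relation `R_S`. -/
def cls {V : Type*} (G : SimpleGraph V) (S : Set V) (x : V) : Set V :=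
  {y | y ∉ S ∧ sameDists G S x y}

/-- `S` is a `k`-antiresolving set: `S` is nonempty, does not cover `V`, and the minimum
size of an equivalence class of `R_S` on `V ∖ S` equals `k`. -/
def IsKARS {V : Type*} (G : SimpleGraph V) (k : ℕ) (S : Set V) : Prop :=
  S.Nonempty ∧ Sᶜ.Nonempty ∧
    (∀ x ∉ S, k ≤ (cls G S x).ncard) ∧ ∃ x ∉ S, (cls G S x).ncard = k

/-- The `k`-metric antidimension: the smallest cardinality of a `k`-antiresolving set,
`⊤` (i.e. `+∞`) if none exists. -/
noncomputable def adim {V : Type*} (G : SimpleGraph V) (k : ℕ) : ℕ∞ :=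
  sInf ((fun S => (S.ncard : ℕ∞)) '' {S : Set V | IsKARS G k S})

/-! A `k`-antiresolving set `S` is left by some edge `xs` with `x ∉ S`, `s ∈ S`. Every vertex in
the class of `x` is at distance `1` from `s`, so that class, of size at least `k`, lies in the
neighbourhood of `s`, whence `k ≤ deg s ≤ Δ`. Since singletons are antiresolving for some `k`,
the achievable values of `k` form a nonempty set bounded by `Δ`, and `κ` is its maximum. -/

section

variable {V : Type*} {G : SimpleGraph V}

lemma SimpleGraph.Preconnected.exists_adj_of_notMem_of_mem (hG : G.Preconnected) {S : Set V}
    {a b : V} (ha : a ∉ S) (hb : b ∈ S) : ∃ x ∉ S, ∃ s ∈ S, G.Adj x s := by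
  obtain ⟨p⟩ := hG a b
  obtain ⟨d, -, hx, hs⟩ := p.exists_boundary_dart Sᶜ ha (by simpa using hb)
  exact ⟨d.fst, hx, d.snd, by simpa using hs, d.adj⟩

lemma cls_subset_neighborSet {S : Set V} {x s : V} (hs : s ∈ S) (hxs : G.Adj x s) :
    cls G S x ⊆ G.neighborSet s := by
  rintro y ⟨-, hy⟩
  have hys : G.dist y s = 1 := by rw [← hy s hs, dist_eq_one_iff_adj.2 hxs]
  exact (dist_eq_one_iff_adj.1 hys).symm

lemma IsKARS.le_maxDegree [Fintype V] [DecidableRel G.Adj] (hG : G.Connected) {k : ℕ}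
    {S : Set V} (hS : IsKARS G k S) : k ≤ G.maxDegree := by
  obtain ⟨⟨b, hb⟩, ⟨a, ha⟩, hmin, -⟩ := hS
  obtain ⟨x, hx, s, hs, hxs⟩ := hG.preconnected.exists_adj_of_notMem_of_mem ha hb
  calc k ≤ (cls G S x).ncard := hmin x hx
    _ ≤ (G.neighborSet s).ncard := Set.ncard_le_ncard (cls_subset_neighborSet hs hxs)
    _ = G.degree s := by
      rw [← card_neighborSet_eq_degree, Set.ncard_eq_toFinset_card', Set.toFinset_card]
    _ ≤ G.maxDegree := G.degree_le_maxDegree s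

lemma exists_isKARS {S : Set V} (hS : S.Nonempty) (hSc : Sᶜ.Nonempty) :
    ∃ k, IsKARS G k S := by
  set sizes := (fun x => (cls G S x).ncard) '' Sᶜ
  obtain ⟨x, hx, hxmin⟩ := Nat.sInf_mem (hSc.image _ : sizes.Nonempty)
  exact ⟨sInf sizes, hS, hSc, fun y hy => Nat.sInf_le ⟨y, hy, rfl⟩, x, hx, hxmin⟩

end

/-- If `G` is a connected graph with maximum degree `Δ`, every `k`-antiresolving set
satisfies `k ≤ Δ`; in particular `G` is `κ`-metric antidimensional for some `κ ≤ Δ`. -/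
theorem stmt0 {V : Type*} [Fintype V] [Nontrivial V] (G : SimpleGraph V)
    [DecidableRel G.Adj] (hG : G.Connected) :
    (∀ (k : ℕ) (S : Set V), IsKARS G k S → k ≤ G.maxDegree) ∧
    ∃ κ ≤ G.maxDegree, (∃ S : Set V, IsKARS G κ S) ∧
      ∀ k, κ < k → ¬∃ S : Set V, IsKARS G k S := by
  have hbound : ∀ (k : ℕ) (S : Set V), IsKARS G k S → k ≤ G.maxDegree :=
    fun _ _ hS => hS.le_maxDegree hG
  obtain ⟨v, w, hvw⟩ := exists_pair_ne V
  have hne : {k | ∃ S : Set V, IsKARS G k S}.Nonempty :=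
    let ⟨k, hk⟩ := exists_isKARS (G := G) (Set.singleton_nonempty v) ⟨w, hvw.symm⟩
    ⟨k, _, hk⟩
  have hbdd : BddAbove {k | ∃ S : Set V, IsKARS G k S} :=
    ⟨G.maxDegree, fun k ⟨S, hS⟩ => hbound k S hS⟩
  obtain ⟨κ, ⟨S, hS⟩, hκ⟩ := hbdd.exists_isGreatest_of_nonempty hne
  exact ⟨hbound, κ, hbound κ S hS, ⟨S, hS⟩, fun k hk hkS => (hκ hkS).not_gt hk⟩
end

section
/- For r,s ≥ 3 both odd, any single vertex of the torus C_r □ C_s forms a 4-antiresolving set, and hence adim_4(C_r □ C_s) = 1. -/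
open SimpleGraph

/-! Distances in `G □ H` add over the factors, so the class of `y` under `R_{x}` is the sphere of
radius `d(x, y)` about `x = (g, h)`. On an odd cycle the reflection `φ : u ↦ 2g - u` is an
automorphism whose only fixed point is `g`; let `ψ` be the reflection about `h` in the other factor.
For `y = (u, v)` with `u ≠ g` and `v ≠ h`, the sphere contains `(u, v)`, `(φ u, v)`, `(u, ψ v)`,
`(φ u, ψ v)`. For `y = (u, h)` it contains `(u, h)`, `(φ u, h)`, `(p, w)`, `(p, ψ w)`, where `p` is
one step closer to `g` than `u` and `w` is a neighbour of `h`. The sphere of radius one is the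
neighbourhood of `x`, which has `2 + 2` vertices. -/

theorem four_le_ncard_of_insert_subset {γ : Type*} {s : Set γ} (hs : s.Finite) {a b c d : γ}
    (hsub : {a, b, c, d} ⊆ s) (hab : a ≠ b) (hac : a ≠ c) (had : a ≠ d) (hbc : b ≠ c)
    (hbd : b ≠ d) (hcd : c ≠ d) : 4 ≤ s.ncard := by
  refine le_of_eq_of_le ?_ (Set.ncard_le_ncard hsub hs)
  rw [Set.ncard_insert_of_notMem (by simp [hab, hac, had]),
    Set.ncard_insert_of_notMem (by simp [hbc, hbd]), Set.ncard_pair hcd]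

namespace SimpleGraph

variable {V W α β : Type*} {G : SimpleGraph V} {G' : SimpleGraph W}

theorem Hom.edist_le (f : G →g G') (u v : V) : G'.edist (f u) (f v) ≤ G.edist u v := by
  by_cases h : G.edist u v = ⊤
  · simp [h]
  obtain ⟨p, hp⟩ := exists_walk_of_edist_ne_top h
  rw [← hp, ← p.length_map f]
  exact SimpleGraph.edist_le _

theorem Iso.dist_eq (f : G ≃g G') (u v : V) : G'.dist (f u) (f v) = G.dist u v := by
  have hle : G.edist u v ≤ G'.edist (f u) (f v) := by
    simpa using f.symm.toHom.edist_le (f u) (f v)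
  exact congrArg ENat.toNat (le_antisymm (f.toHom.edist_le u v) hle)

theorem Connected.dist_boxProd {G : SimpleGraph α} {H : SimpleGraph β} (hG : G.Connected)
    (hH : H.Connected) (x y : α × β) :
    (G □ H).dist x y = G.dist x.1 y.1 + H.dist x.2 y.2 := by
  apply Nat.cast_injective (R := ℕ∞)
  push_cast
  rw [((hG.boxProd hH).preconnected x y).coe_dist_eq_edist,
    (hG.preconnected _ _).coe_dist_eq_edist, (hH.preconnected _ _).coe_dist_eq_edist,
    edist_boxProd]

theorem Connected.exists_dist_add_one_eq (hG : G.Connected) {u v : V} (huv : u ≠ v) :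
    ∃ w, G.dist w v + 1 = G.dist u v := by
  obtain ⟨p, hp⟩ := hG.exists_walk_length_eq_dist u v
  cases p with
  | nil => exact absurd rfl huv
  | @cons _ w _ hadj q =>
    refine ⟨w, le_antisymm ?_ ?_⟩
    · simpa [← hp] using dist_le q
    · calc G.dist u v ≤ G.dist u w + G.dist w v := hG.dist_triangle
        _ = G.dist w v + 1 := by rw [dist_eq_one_iff_adj.mpr hadj, add_comm]

theorem cls_singleton (G : SimpleGraph V) (x y : V) :
    cls G {x} y = {z | z ≠ x ∧ G.dist z x = G.dist y x} := by
  ext z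
  simp [cls, sameDists, eq_comm]

theorem Iso.ncard_cls_singleton (f : G ≃g G') (x y : V) :
    (cls G' {f x} (f y)).ncard = (cls G {x} y).ncard := by
  rw [← Set.ncard_image_of_injective _ f.injective, cls_singleton, cls_singleton]
  congr 1
  ext z
  obtain ⟨z, rfl⟩ := f.surjective z
  simp [f.dist_eq]

theorem ncard_cls_singleton_of_adj {x y : V} [Fintype (G.neighborSet x)] (h : G.Adj y x) :
    (cls G {x} y).ncard = G.degree x := by
  have : cls G {x} y = G.neighborSet x := by
    ext z
    simp only [cls_singleton, dist_eq_one_iff_adj.mpr h, Set.mem_ofPred_eq, mem_neighborSet]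
    rw [dist_eq_one_iff_adj]
    exact ⟨fun hz => hz.2.symm, fun hz => ⟨hz.ne.symm, hz.symm⟩⟩
  rw [this, ← card_neighborSet_eq_degree, ← Nat.card_eq_fintype_card, Nat.card_coe_set_eq]

theorem adim_eq_one_of_isKARS_singleton [Finite V] {k : ℕ} {x : V} (h : IsKARS G k {x}) :
    adim G k = 1 := by
  refine le_antisymm (sInf_le ⟨{x}, h, by simp⟩) (le_sInf ?_)
  rintro _ ⟨S, hS, rfl⟩
  exact Nat.one_le_cast.mpr ((Set.ncard_pos S.toFinite).mpr hS.1)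

section BoxProd

variable {G : SimpleGraph α} {H : SimpleGraph β}

theorem mem_cls_singleton_boxProd (hG : G.Connected) (hH : H.Connected) {x y z : α × β} :
    z ∈ cls (G □ H) {x} y ↔
      z ≠ x ∧ G.dist z.1 x.1 + H.dist z.2 x.2 = G.dist y.1 x.1 + H.dist y.2 x.2 := by
  rw [cls_singleton, Set.mem_ofPred_eq, hG.dist_boxProd hH, hG.dist_boxProd hH]

theorem four_le_ncard_cls_boxProd_of_ne_of_ne [Finite α] [Finite β] (hG : G.Connected)
    (hH : H.Connected) {g : α} {h : β} {φ : G ≃g G} {ψ : H ≃g H} (hφ : ∀ u, φ u = u ↔ u = g)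
    (hψ : ∀ v, ψ v = v ↔ v = h) {u : α} {v : β} (hu : u ≠ g) (hv : v ≠ h) :
    4 ≤ (cls (G □ H) {(g, h)} (u, v)).ncard := by
  have hφu : φ u ≠ u := (hφ u).not.mpr hu
  have hψv : ψ v ≠ v := (hψ v).not.mpr hv
  have hφd : G.dist (φ u) g = G.dist u g := by simpa [(hφ g).2 rfl] using φ.dist_eq u g
  have hψd : H.dist (ψ v) h = H.dist v h := by simpa [(hψ h).2 rfl] using ψ.dist_eq v h
  have hφg : φ u ≠ g := fun he => hu (φ.injective (he.trans ((hφ g).2 rfl).symm))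
  refine four_le_ncard_of_insert_subset (Set.toFinite _) (a := (u, v)) (b := (φ u, v))
    (c := (u, ψ v)) (d := (φ u, ψ v)) ?_ ?_ ?_ ?_ ?_ ?_ ?_
  · simp only [Set.insert_subset_iff, Set.singleton_subset_iff, mem_cls_singleton_boxProd hG hH]
    simp [hu, hv, hφg, hφd, hψd]
  all_goals simp [hφu, hφu.symm, hψv.symm]

theorem four_le_ncard_cls_boxProd_of_ne_of_eq [Finite α] [Finite β] [Nontrivial β]
    (hG : G.Connected) (hH : H.Connected) {g : α} {h : β} {φ : G ≃g G} {ψ : H ≃g H}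
    (hφ : ∀ u, φ u = u ↔ u = g) (hψ : ∀ v, ψ v = v ↔ v = h) {u : α} (hu : u ≠ g) :
    4 ≤ (cls (G □ H) {(g, h)} (u, h)).ncard := by
  obtain ⟨p, hp⟩ := hG.exists_dist_add_one_eq hu
  obtain ⟨w, hw⟩ := hH.preconnected.exists_adj_of_nontrivial h
  have hφu : φ u ≠ u := (hφ u).not.mpr hu
  have hψw : ψ w ≠ w := (hψ w).not.mpr hw.ne.symm
  have hφd : G.dist (φ u) g = G.dist u g := by simpa [(hφ g).2 rfl] using φ.dist_eq u g
  have hψd : H.dist (ψ w) h = H.dist w h := by simpa [(hψ h).2 rfl] using ψ.dist_eq w h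
  have hwd : H.dist w h = 1 := dist_eq_one_iff_adj.mpr hw.symm
  have hφg : φ u ≠ g := fun he => hu (φ.injective (he.trans ((hφ g).2 rfl).symm))
  have hψh : ψ w ≠ h := fun he => hw.ne (ψ.injective (((hψ h).2 rfl).trans he.symm))
  refine four_le_ncard_of_insert_subset (Set.toFinite _) (a := (u, h)) (b := (φ u, h))
    (c := (p, w)) (d := (p, ψ w)) ?_ ?_ ?_ ?_ ?_ ?_ ?_
  · simp only [Set.insert_subset_iff, Set.singleton_subset_iff, mem_cls_singleton_boxProd hG hH]
    simp [hu, hφg, hw.ne.symm, hψh, hφd, hψd, hwd, hp]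
  all_goals simp [hφu.symm, hψw.symm, hw.ne, hψh.symm]

theorem four_le_ncard_cls_boxProd [Finite α] [Finite β] [Nontrivial α] [Nontrivial β]
    (hG : G.Connected) (hH : H.Connected) {g : α} {h : β} {φ : G ≃g G} {ψ : H ≃g H}
    (hφ : ∀ u, φ u = u ↔ u = g) (hψ : ∀ v, ψ v = v ↔ v = h) {y : α × β} (hy : y ≠ (g, h)) :
    4 ≤ (cls (G □ H) {(g, h)} y).ncard := by
  obtain ⟨u, v⟩ := y
  by_cases hu : u = g
  · subst hu
    have hv : v ≠ h := fun hv => hy (by rw [hv])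
    have := four_le_ncard_cls_boxProd_of_ne_of_eq hH hG hψ hφ hv
    rwa [← (boxProdComm H G).ncard_cls_singleton] at this
  · by_cases hv : v = h
    · subst hv
      exact four_le_ncard_cls_boxProd_of_ne_of_eq hG hH hφ hψ hu
    · exact four_le_ncard_cls_boxProd_of_ne_of_ne hG hH hφ hψ hu hv

end BoxProd

def cycleGraph.reflect {n : ℕ} [NeZero n] (c : Fin n) : cycleGraph n ≃g cycleGraph n where
  toEquiv := Equiv.subLeft c
  map_rel_iff' := by simp [cycleGraph_adj', or_comm]

theorem cycleGraph.reflect_apply {n : ℕ} [NeZero n] (c u : Fin n) : reflect c u = c - u := rfl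

theorem cycleGraph.reflect_add_self_apply_eq_self_iff {n : ℕ} [NeZero n] (hn : Odd n)
    (g u : Fin n) : reflect (g + g) u = u ↔ u = g := by
  have h2 : Function.Injective (2 • · : Fin n → Fin n) :=
    (Nat.Coprime.nsmul_right_bijective (by simpa using hn)).injective
  rw [reflect_apply, sub_eq_iff_eq_add, ← two_nsmul, ← two_nsmul, h2.eq_iff, eq_comm]

end SimpleGraph

/-- For odd `r, s ≥ 3`, any single vertex of the torus `C_r □ C_s` is a 4-ARS, and
`adim_4(C_r □ C_s) = 1`. -/
theorem stmt2 (r s : ℕ) (hr : 3 ≤ r) (hs : 3 ≤ s) (hro : Odd r) (hso : Odd s) :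
    (∀ x : Fin r × Fin s, IsKARS ((cycleGraph r).boxProd (cycleGraph s)) 4 {x}) ∧
    adim ((cycleGraph r).boxProd (cycleGraph s)) 4 = 1 := by
  obtain ⟨r, rfl⟩ : ∃ m, r = m + 3 := ⟨r - 3, by omega⟩
  obtain ⟨s, rfl⟩ : ∃ m, s = m + 3 := ⟨s - 3, by omega⟩
  have hCr : (cycleGraph (r + 3)).Connected := cycleGraph_connected
  have hCs : (cycleGraph (s + 3)).Connected := cycleGraph_connected
  have hK : ∀ x, IsKARS ((cycleGraph (r + 3)).boxProd (cycleGraph (s + 3))) 4 {x} := by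
    intro x
    obtain ⟨y, hxy⟩ := (hCr.boxProd hCs).preconnected.exists_adj_of_nontrivial x
    refine ⟨Set.singleton_nonempty x, ⟨y, hxy.ne.symm⟩, fun z hz => ?_, y, hxy.ne.symm, ?_⟩
    · exact four_le_ncard_cls_boxProd hCr hCs
        (cycleGraph.reflect_add_self_apply_eq_self_iff hro x.1)
        (cycleGraph.reflect_add_self_apply_eq_self_iff hso x.2) hz
    · rw [ncard_cls_singleton_of_adj hxy.symm, degree_boxProd, cycleGraph_degree_three_le,
        cycleGraph_degree_three_le]
  exact ⟨hK, adim_eq_one_of_isKARS_singleton (hK (0, 0))⟩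
end

section
/- For r,s ≥ 3 both even, adim_1(C_r □ C_s) = 1, while if r and s are not both even then adim_1(C_r □ C_s) = 2, with a minimum 1-ARS given by two adjacent vertices {(u_0,v_0),(u_0,v_1)} when s is odd. -/
open SimpleGraph

/-!
In `C_r □ C_s` the distance from `x` to `y` is `torusNorm (x - y)`, the sum of the cyclic
distances of the two coordinate offsets to `0`. If `r` and `s` are even, the antipode of `0` is
the only vertex at the diameter `r / 2 + s / 2`, so `{0}` is a 1-ARS. Otherwise every sphere around
a vertex has at least two points: negate a coordinate offset that is not its own negative; if both
are self-inverse, the one in the odd cycle is `0` and the other is an antipode of the even cycle,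
and one step along the odd cycle traded for one step back along the even one keeps the norm. So
no singleton is a 1-ARS, while for `s` odd the vertex `(0, (s + 1) / 2)` is the only one
equidistant from `(0, 0)` and `(0, 1)`.
-/

lemma SimpleGraph.Reachable.le_add_dist {V : Type*} {G : SimpleGraph V} {u v : V}
    {f : V → ℕ} (hf : ∀ a b, G.Adj a b → f a ≤ f b + 1) (h : G.Reachable u v) :
    f u ≤ f v + G.dist u v := by
  obtain ⟨p, hp⟩ := h.exists_walk_length_eq_dist
  rw [← hp]
  clear hp h
  induction p with
  | nil => simp
  | cons hadj p ih =>
    rw [Walk.length_cons]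
    have := hf _ _ hadj
    omega

lemma SimpleGraph.dist_boxProd {α β : Type*} {G : SimpleGraph α} {H : SimpleGraph β}
    (hG : G.Preconnected) (hH : H.Preconnected) (x y : α × β) :
    (G □ H).dist x y = G.dist x.1 y.1 + H.dist x.2 y.2 := by
  rw [dist, edist_boxProd, ← (hG x.1 y.1).coe_dist_eq_edist, ← (hH x.2 y.2).coe_dist_eq_edist]
  rfl

section Antiresolving

variable {V : Type*} (G : SimpleGraph V)

lemma mem_cls_self {S : Set V} {x : V} (hx : x ∉ S) : x ∈ cls G S x :=
  ⟨hx, fun _ _ => rfl⟩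

lemma isKARS_one_of_cls_eq_singleton [Finite V] {S : Set V} (hS : S.Nonempty) {x : V}
    (hx : x ∉ S) (hcls : cls G S x = {x}) : IsKARS G 1 S :=
  ⟨hS, ⟨x, hx⟩, fun y hy => (Set.nonempty_of_mem (mem_cls_self G hy)).ncard_pos, x, hx,
    by rw [hcls, Set.ncard_singleton]⟩

lemma not_isKARS_one_singleton [Finite V] {w : V}
    (h : ∀ x ≠ w, ∃ y ≠ x, y ≠ w ∧ G.dist y w = G.dist x w) : ¬IsKARS G 1 {w} := by
  rintro ⟨-, -, -, x, hx, hcard⟩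
  obtain ⟨y, hyx, hyw, hdist⟩ := h x hx
  have hsub : {x, y} ⊆ cls G {w} x := by
    rintro z (rfl | rfl)
    · exact mem_cls_self G hx
    · exact ⟨hyw, fun z hz => hz ▸ hdist.symm⟩
  have := Set.ncard_le_ncard hsub (Set.toFinite _)
  rw [Set.ncard_pair hyx.symm] at this
  omega

lemma adim_le {k : ℕ} {S : Set V} (hS : IsKARS G k S) : adim G k ≤ S.ncard :=
  sInf_le ⟨S, hS, rfl⟩

lemma le_adim {k m : ℕ} (h : ∀ S, IsKARS G k S → m ≤ S.ncard) : m ≤ adim G k :=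
  le_sInf <| by
    rintro _ ⟨S, hS, rfl⟩
    exact Nat.cast_le.mpr (h S hS)

lemma adim_eq_one [Finite V] {k : ℕ} {w : V} (hw : IsKARS G k {w}) : adim G k = 1 := by
  refine le_antisymm (by simpa using adim_le G hw) (le_adim G (m := 1) fun S hS => ?_)
  exact hS.1.ncard_pos

lemma adim_eq_two [Finite V] {k : ℕ} {a b : V} (hab : a ≠ b) (hpair : IsKARS G k {a, b})
    (hsingle : ∀ w, ¬IsKARS G k {w}) : adim G k = 2 := by
  refine le_antisymm (by simpa [Set.ncard_pair hab] using adim_le G hpair)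
    (le_adim G (m := 2) fun S hS => ?_)
  have hpos : 1 ≤ S.ncard := hS.1.ncard_pos
  have hne : S.ncard ≠ 1 := fun h => by
    obtain ⟨w, rfl⟩ := Set.ncard_eq_one.mp h
    exact hsingle w hS
  omega

end Antiresolving

open Fin.CommRing

def cycleNorm {n : ℕ} (a : Fin n) : ℕ := min a.val (n - a.val)

section CycleNorm

variable {n : ℕ} [NeZero n]

lemma Fin.val_one_of_one_lt (hn : 1 < n) : (1 : Fin n).val = 1 := by
  rw [Fin.val_one', Nat.mod_eq_of_lt hn]

lemma Fin.val_neg_of_ne_zero {a : Fin n} (ha : a ≠ 0) : (-a).val = n - a.val := by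
  have : a.val ≠ 0 := Fin.val_ne_zero_iff.mpr ha
  rw [Fin.val_neg', Nat.mod_eq_of_lt (by omega)]

lemma Fin.eq_zero_of_neg_eq_self (hn : Odd n) {a : Fin n} (h : -a = a) :
    a = 0 := by
  by_contra ha
  have hval := Fin.val_neg_of_ne_zero ha
  rw [h] at hval
  obtain ⟨k, rfl⟩ := hn
  omega

lemma cycleNorm_eq_min_val_neg (a : Fin n) : cycleNorm a = min a.val (-a).val := by
  rcases eq_or_ne a 0 with rfl | ha
  · simp [cycleNorm]
  · rw [cycleNorm, Fin.val_neg_of_ne_zero ha]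

@[simp]
lemma cycleNorm_zero : cycleNorm (0 : Fin n) = 0 := by simp [cycleNorm]

@[simp]
lemma cycleNorm_neg (a : Fin n) : cycleNorm (-a) = cycleNorm a := by
  rw [cycleNorm_eq_min_val_neg, cycleNorm_eq_min_val_neg, neg_neg, min_comm]

lemma cycleNorm_eq_zero_iff {a : Fin n} : cycleNorm a = 0 ↔ a = 0 := by
  have := a.isLt
  rw [cycleNorm, Fin.ext_iff, Fin.val_zero]
  omega

lemma cycleNorm_add_one_le (a : Fin n) : cycleNorm (a + 1) ≤ cycleNorm a + 1 := by
  have hval : ∀ b : Fin n, (b + 1).val ≤ b.val + 1 := fun b => by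
    rw [Fin.val_add, Fin.val_one']
    exact (Nat.mod_le _ _).trans (Nat.add_le_add_left (Nat.mod_le _ _) _)
  rcases eq_or_ne a 0 with rfl | ha
  · exact (min_le_left _ _).trans (hval 0)
  · have hneg : (-(a + 1)).val ≤ (-a).val + 1 := by
      rw [neg_add', Fin.val_sub_one_of_ne_zero (neg_ne_zero.mpr ha)]
      omega
    rw [cycleNorm_eq_min_val_neg, cycleNorm_eq_min_val_neg, ← min_add_add_right]
    exact min_le_min (hval a) hneg

lemma cycleNorm_sub_one_le (a : Fin n) : cycleNorm (a - 1) ≤ cycleNorm a + 1 := by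
  rw [← cycleNorm_neg, neg_sub', sub_neg_eq_add, ← cycleNorm_neg a]
  exact cycleNorm_add_one_le (-a)

lemma val_eq_of_cycleNorm_sub_one_eq (hn : Odd n) (hn1 : 1 < n) {b : Fin n}
    (h : cycleNorm (b - 1) = cycleNorm b) : b.val = (n + 1) / 2 := by
  obtain ⟨k, rfl⟩ := hn
  have := b.isLt
  rcases eq_or_ne b 0 with rfl | hb
  · rw [zero_sub, cycleNorm_neg, cycleNorm_zero, cycleNorm_eq_zero_iff] at h
    simpa [h] using Fin.val_one_of_one_lt hn1
  · have := Fin.val_ne_zero_iff.mpr hb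
    simp only [cycleNorm, Fin.val_sub_one_of_ne_zero hb] at h
    omega

end CycleNorm

section CycleGraph

variable {n : ℕ} [NeZero n]

lemma cycleGraph_dist_add_one_le (v : Fin n) : (cycleGraph n).dist (v + 1) v ≤ 1 := by
  rcases eq_or_ne (v + 1) v with h | h
  · simp [h]
  · refine (dist_eq_one_iff_adj.mpr ?_).le
    rw [cycleGraph_adj']
    left
    have : n ≠ 1 := by rintro rfl; exact h (Subsingleton.elim _ _)
    rw [add_sub_cancel_left]
    exact Fin.val_one_of_one_lt (by have := NeZero.ne n; omega)

lemma cycleGraph_dist_add_le_val (v a : Fin n) : (cycleGraph n).dist (v + a) v ≤ a.val := by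
  induction h : a.val generalizing a with
  | zero => simp [Fin.val_eq_zero_iff.mp h]
  | succ k ih =>
    have ha : a ≠ 0 := by rintro rfl; simp at h
    have hk := ih (a - 1) (by rw [Fin.val_sub_one_of_ne_zero ha, h]; rfl)
    calc (cycleGraph n).dist (v + a) v
        ≤ (cycleGraph n).dist (v + a) (v + (a - 1)) + (cycleGraph n).dist (v + (a - 1)) v :=
          (cycleGraph_preconnected _ _).dist_triangle_left _
      _ ≤ 1 + k := by
          gcongr
          have hstep := cycleGraph_dist_add_one_le (v + (a - 1))
          rwa [add_assoc, sub_add_cancel] at hstep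
      _ = k + 1 := add_comm _ _

lemma cycleNorm_sub_le_of_adj {a b : Fin n} (hab : (cycleGraph n).Adj a b) (v : Fin n) :
    cycleNorm (a - v) ≤ cycleNorm (b - v) + 1 := by
  have hone : ∀ c : Fin n, c.val = 1 → c = 1 := fun c hc => by
    have := c.isLt
    rw [Fin.ext_iff, hc, Fin.val_one_of_one_lt (by omega)]
  rcases cycleGraph_adj'.mp hab with h | h
  · have : a - v = (b - v) + 1 := by rw [← hone _ h]; ring
    exact this ▸ cycleNorm_add_one_le _
  · have : a - v = (b - v) - 1 := by rw [← hone _ h]; ring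
    exact this ▸ cycleNorm_sub_one_le _

theorem cycleGraph_dist (u v : Fin n) : (cycleGraph n).dist u v = cycleNorm (u - v) := by
  apply le_antisymm
  · rw [cycleNorm_eq_min_val_neg, le_min_iff]
    constructor
    · simpa using cycleGraph_dist_add_le_val v (u - v)
    · simpa [SimpleGraph.dist_comm] using cycleGraph_dist_add_le_val u (v - u)
  · simpa using (cycleGraph_preconnected u v).le_add_dist fun a b hab =>
      cycleNorm_sub_le_of_adj hab v

end CycleGraph

def torusNorm {r s : ℕ} (p : Fin r × Fin s) : ℕ := cycleNorm p.1 + cycleNorm p.2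

lemma torusNorm_swap {r s : ℕ} (p : Fin r × Fin s) : torusNorm p.swap = torusNorm p :=
  add_comm _ _

section Torus

variable {r s : ℕ} [NeZero r] [NeZero s]

theorem dist_cycleGraph_boxProd (x y : Fin r × Fin s) :
    (cycleGraph r □ cycleGraph s).dist x y = torusNorm (x - y) := by
  rw [dist_boxProd cycleGraph_preconnected cycleGraph_preconnected, cycleGraph_dist,
    cycleGraph_dist]
  rfl

lemma exists_torusNorm_eq_of_odd_left (hr : Odd r) (hr1 : 1 < r) {p : Fin r × Fin s}
    (hp : p ≠ 0) : ∃ q ≠ p, q ≠ 0 ∧ torusNorm q = torusNorm p := by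
  obtain ⟨a, b⟩ := p
  by_cases ha : -a = a
  · by_cases hb : -b = b
    · obtain rfl := Fin.eq_zero_of_neg_eq_self hr ha
      have hb0 : b ≠ 0 := by rintro rfl; exact hp rfl
      have hbval := Fin.val_neg_of_ne_zero hb0
      rw [hb] at hbval
      have hone := Fin.val_one_of_one_lt hr1
      have h10 : (1 : Fin r) ≠ 0 := fun h => by simp [h] at hone
      refine ⟨(1, b - 1), fun h => h10 (congrArg Prod.fst h),
        fun h => h10 (congrArg Prod.fst h), ?_⟩
      simp only [torusNorm, cycleNorm, Fin.val_sub_one_of_ne_zero hb0, hone, Fin.val_zero]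
      omega
    · refine ⟨(a, -b), fun h => hb (congrArg Prod.snd h), fun h => hb ?_, by simp [torusNorm]⟩
      rw [Prod.mk_eq_zero, neg_eq_zero] at h
      rw [h.2, neg_zero]
  · refine ⟨(-a, b), fun h => ha (congrArg Prod.fst h), fun h => ha ?_, by simp [torusNorm]⟩
    rw [Prod.mk_eq_zero, neg_eq_zero] at h
    rw [h.1, neg_zero]

lemma exists_torusNorm_eq (hrs : Odd r ∨ Odd s) (hr : 1 < r) (hs : 1 < s)
    {p : Fin r × Fin s} (hp : p ≠ 0) : ∃ q ≠ p, q ≠ 0 ∧ torusNorm q = torusNorm p := by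
  rcases hrs with hr' | hs'
  · exact exists_torusNorm_eq_of_odd_left hr' hr hp
  · obtain ⟨q, hqp, hq0, hq⟩ :=
      exists_torusNorm_eq_of_odd_left hs' hs (p := p.swap)
        (fun h => hp (by simpa using congrArg Prod.swap h))
    refine ⟨q.swap, fun h => hqp (by simp [← h]),
      fun h => hq0 (by simpa using congrArg Prod.swap h), ?_⟩
    rw [← torusNorm_swap, Prod.swap_swap, hq, torusNorm_swap]

lemma isKARS_one_zero_of_even (hr : Even r) (hs : Even s) :
    IsKARS (cycleGraph r □ cycleGraph s) 1 {0} := by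
  have hr0 := NeZero.ne r
  have hs0 := NeZero.ne s
  obtain ⟨k, hk⟩ := hr
  obtain ⟨l, hl⟩ := hs
  set x : Fin r × Fin s := (⟨k, by omega⟩, ⟨l, by omega⟩)
  have hx : x ∉ ({0} : Set (Fin r × Fin s)) := fun h => by
    simp [x, Prod.ext_iff, Fin.ext_iff] at h
    omega
  refine isKARS_one_of_cls_eq_singleton _ (Set.singleton_nonempty 0) hx
    (Set.eq_singleton_iff_unique_mem.mpr ⟨mem_cls_self _ hx, ?_⟩)
  rintro y ⟨-, hy⟩
  have hdist := hy 0 rfl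
  simp only [dist_cycleGraph_boxProd, sub_zero, torusNorm, cycleNorm, x] at hdist
  have := y.1.isLt
  have := y.2.isLt
  exact Prod.ext (Fin.ext (by simp only [x]; omega)) (Fin.ext (by simp only [x]; omega))

lemma isKARS_one_pair_of_unique {e c : Fin r × Fin s}
    (hc : c ∉ ({0, e} : Set (Fin r × Fin s)))
    (huniq : ∀ q, torusNorm q = torusNorm c → torusNorm (q - e) = torusNorm (c - e) → q = c) :
    IsKARS (cycleGraph r □ cycleGraph s) 1 {0, e} := by
  refine isKARS_one_of_cls_eq_singleton _ (Set.insert_nonempty _ _) hc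
    (Set.eq_singleton_iff_unique_mem.mpr
      ⟨mem_cls_self _ hc, fun q ⟨_, hq⟩ => huniq q ?_ ?_⟩)
  · simpa [dist_cycleGraph_boxProd] using (hq 0 (Or.inl rfl)).symm
  · simpa [dist_cycleGraph_boxProd] using (hq e (Or.inr rfl)).symm

lemma eq_of_torusNorm_eq_of_odd_right (hs : Odd s) (hs1 : 1 < s) {m : Fin s}
    (hm : m.val = (s + 1) / 2) {q : Fin r × Fin s}
    (h0 : torusNorm q = torusNorm ((0, m) : Fin r × Fin s))
    (h1 : torusNorm (q - (0, 1)) = torusNorm (((0, m) : Fin r × Fin s) - (0, 1))) :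
    q = (0, m) := by
  obtain ⟨a, b⟩ := q
  have hm0 : m ≠ 0 := fun h => by
    rw [h, Fin.val_zero] at hm
    omega
  have hm1 : cycleNorm (m - 1) = cycleNorm m := by
    obtain ⟨k, rfl⟩ := hs
    simp only [cycleNorm, Fin.val_sub_one_of_ne_zero hm0, hm]
    omega
  simp only [torusNorm, Prod.mk_sub_mk, sub_zero, cycleNorm_zero, zero_add] at h0 h1
  have hb : b = m := Fin.ext ((val_eq_of_cycleNorm_sub_one_eq hs hs1 (by omega)).trans hm.symm)
  rw [hb] at h0
  have ha : a = 0 := cycleNorm_eq_zero_iff.mp (by omega)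
  rw [ha, hb]

lemma isKARS_one_pair_right (hs : Odd s) (hs1 : 1 < s) :
    IsKARS (cycleGraph r □ cycleGraph s) 1 {0, (0, 1)} := by
  refine isKARS_one_pair_of_unique (c := (0, ⟨(s + 1) / 2, by omega⟩)) ?_
    fun q h0 h1 => eq_of_torusNorm_eq_of_odd_right hs hs1 rfl h0 h1
  obtain ⟨k, hk⟩ := hs
  simp [Prod.ext_iff, Fin.ext_iff, Nat.mod_eq_of_lt hs1]
  omega

lemma isKARS_one_pair_left (hr : Odd r) (hr1 : 1 < r) :
    IsKARS (cycleGraph r □ cycleGraph s) 1 {0, (1, 0)} := by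
  refine isKARS_one_pair_of_unique (c := (⟨(r + 1) / 2, by omega⟩, 0)) ?_ fun q h0 h1 => ?_
  · obtain ⟨k, hk⟩ := hr
    simp [Prod.ext_iff, Fin.ext_iff, Nat.mod_eq_of_lt hr1]
    omega
  · have hswap := eq_of_torusNorm_eq_of_odd_right (r := s) hr hr1 rfl (q := q.swap)
      (by rw [torusNorm_swap, h0, ← torusNorm_swap]; rfl)
      (show torusNorm (q - (1, 0)).swap = _ by rw [torusNorm_swap, h1, ← torusNorm_swap]; rfl)
    simpa using congrArg Prod.swap hswap

lemma not_isKARS_one_singleton_of_odd (hrs : Odd r ∨ Odd s)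
    (hr : 1 < r) (hs : 1 < s) (w : Fin r × Fin s) :
    ¬IsKARS (cycleGraph r □ cycleGraph s) 1 {w} := by
  refine not_isKARS_one_singleton _ fun x hx => ?_
  obtain ⟨q, hqx, hq0, hq⟩ := exists_torusNorm_eq hrs hr hs (sub_ne_zero.mpr hx)
  refine ⟨q + w, fun h => hqx (by rw [← h, add_sub_cancel_right]),
    fun h => hq0 (add_eq_right.mp h), ?_⟩
  rw [dist_cycleGraph_boxProd, dist_cycleGraph_boxProd, add_sub_cancel_right, hq]

end Torus

/-- For `r, s ≥ 3`: if `r, s` are both even then `adim_1(C_r □ C_s) = 1`; if not both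
even then `adim_1(C_r □ C_s) = 2`, with the two adjacent vertices
`{(u_0,v_0), (u_0,v_1)}` a minimum 1-ARS when `s` is odd. -/
theorem stmt9 (r s : ℕ) (hr : 3 ≤ r) (hs : 3 ≤ s) :
    (Even r → Even s → adim ((cycleGraph r).boxProd (cycleGraph s)) 1 = 1) ∧
    (¬(Even r ∧ Even s) →
      adim ((cycleGraph r).boxProd (cycleGraph s)) 1 = 2 ∧
      (Odd s → IsKARS ((cycleGraph r).boxProd (cycleGraph s)) 1
        ({(⟨0, by omega⟩, ⟨0, by omega⟩), (⟨0, by omega⟩, ⟨1, by omega⟩)} :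
          Set (Fin r × Fin s)))) := by
  have : NeZero r := ⟨by omega⟩
  have : NeZero s := ⟨by omega⟩
  have hpair : ({(⟨0, by omega⟩, ⟨0, by omega⟩), (⟨0, by omega⟩, ⟨1, by omega⟩)} :
      Set (Fin r × Fin s)) = {0, (0, 1)} := by
    rw [show (⟨1, _⟩ : Fin s) = 1 from Fin.ext (Fin.val_one_of_one_lt (by omega)).symm]
    rfl
  refine ⟨fun her hes => adim_eq_one _ (isKARS_one_zero_of_even her hes), fun hrs => ?_⟩
  rw [not_and_or, Nat.not_even_iff_odd, Nat.not_even_iff_odd] at hrs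
  have hsingle := not_isKARS_one_singleton_of_odd hrs (by omega) (by omega)
  refine ⟨?_, fun hso => hpair ▸ isKARS_one_pair_right hso (by omega)⟩
  rcases hrs with hro | hso
  · refine adim_eq_two _ ?_ (isKARS_one_pair_left hro (by omega)) hsingle
    simp [Prod.ext_iff, Fin.ext_iff, Nat.mod_eq_of_lt (show 1 < r by omega)]
  · refine adim_eq_two _ ?_ (isKARS_one_pair_right hso (by omega)) hsingle
    simp [Prod.ext_iff, Fin.ext_iff, Nat.mod_eq_of_lt (show 1 < s by omega)]
end

section
/- For r ≥ 2 and s ≥ 3 with r,s both odd, the cylinder P_r □ C_s has no 3-antiresolving set; i.e., adim_3(P_r □ C_s) = +∞. -/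
open SimpleGraph

/-!
Write `r = 2m + 1` and `s = 2h + 1`; the distance from `(i, j)` to `(a, b)` is
`|i - a| + cycDist j b`. The vertices farthest from a landmark `(a, b)` are the antipodes
`(e, b ± h)` in the end row(s) `e` farthest from `a`; there are at most two of them, so a
`3`-antiresolving set `S` must contain them. If some landmark is off the middle row, its far end
row is unique, and these forced memberships bounce between the two end rows shifting the column
by `2h ≡ -1`; hence both end rows lie in `S`, and then every other vertex is determined by its
distances to them. If `S` lies in the middle row and meets two columns `b₁ ≠ b₂`, the class of
`(0, b₁ + h)` is contained in `{(0, b₁ + h), (2m, b₁ + h)}`. If `S` is the single centre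
`(m, b)`, the point reflection through it is a distance-preserving involution with no fixed
point outside `S`, so every class has even size.
-/

namespace SimpleGraph

variable {V : Type*} {G : SimpleGraph V}

theorem dist_eq_of_potential (f : V → ℕ) {z : V} (hlip : ∀ u v, G.Adj u v → f u ≤ f v + 1)
    (hzero : ∀ u, f u = 0 ↔ u = z) (hdesc : ∀ u, 0 < f u → ∃ v, G.Adj u v ∧ f v < f u)
    (u : V) : G.dist u z = f u := by
  have lower : ∀ {u} (p : G.Walk u z), f u ≤ p.length := by
    intro u p
    induction p with
    | nil => exact ((hzero _).2 rfl).le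
    | cons hadj _ ih => have := ih hzero; have := hlip _ _ hadj; rw [Walk.length_cons]; omega
  have upper : ∀ n u, f u = n → ∃ p : G.Walk u z, p.length ≤ n := by
    intro n
    induction n using Nat.strong_induction_on with
    | _ n ih =>
      intro u hu
      rcases Nat.eq_zero_or_pos n with rfl | hn
      · obtain rfl := (hzero u).1 hu
        exact ⟨Walk.nil, le_rfl⟩
      · obtain ⟨v, hadj, hlt⟩ := hdesc u (hu ▸ hn)
        obtain ⟨p, hp⟩ := ih (f v) (hu ▸ hlt) v rfl
        exact ⟨Walk.cons hadj p, by rw [Walk.length_cons]; omega⟩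
  obtain ⟨p, hp⟩ := upper _ u rfl
  obtain ⟨q, hq⟩ := p.reachable.exists_walk_length_eq_dist
  have := dist_le p
  have := lower q
  omega

theorem dist_boxProd_of_reachable {W : Type*} {H : SimpleGraph W} {x y : V × W}
    (h₁ : G.Reachable x.1 y.1) (h₂ : H.Reachable x.2 y.2) :
    (G □ H).dist x y = G.dist x.1 y.1 + H.dist x.2 y.2 := by
  have h := edist_boxProd (G := G) (H := H) x y
  rw [← h₁.coe_dist_eq_edist, ← h₂.coe_dist_eq_edist,
    ← (reachable_boxProd.2 ⟨h₁, h₂⟩).coe_dist_eq_edist] at h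
  exact_mod_cast h

end SimpleGraph

theorem pathGraph_dist {n : ℕ} (i a : Fin n) : (pathGraph n).dist i a = Nat.dist i a := by
  refine dist_eq_of_potential (fun i : Fin n => Nat.dist i a) ?_ ?_ ?_ i
  · intro u v huv
    rw [pathGraph_adj] at huv
    simp only [Nat.dist]
    omega
  · intro u
    simp only [Nat.dist, Fin.ext_iff]
    omega
  · intro u hu
    simp only [Nat.dist] at hu
    rcases Nat.lt_or_gt_of_ne (show u.val ≠ a.val by omega) with hlt | hgt
    · exact ⟨⟨u + 1, by omega⟩, pathGraph_adj.2 (Or.inl rfl), by simp only [Nat.dist]; omega⟩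
    · exact ⟨⟨u - 1, by omega⟩, pathGraph_adj.2 (Or.inr (by simp only; omega)),
        by simp only [Nat.dist]; omega⟩

def cycDist {s : ℕ} (j b : Fin s) : ℕ := min (j - b).val (s - (j - b).val)

section cycle

variable {s : ℕ} [NeZero s]

lemma cycDist_eq_zero_iff {j b : Fin s} : cycDist j b = 0 ↔ j = b := by
  have := (j - b).isLt
  rw [cycDist, ← sub_eq_zero (a := j), Fin.ext_iff, Fin.val_zero]
  omega

@[simp]
lemma cycDist_self (b : Fin s) : cycDist b b = 0 := cycDist_eq_zero_iff.2 rfl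

lemma val_sub_of_val_sub_eq_one {u v : Fin s} (huv : (u - v).val = 1) (b : Fin s) :
    (u - b).val = (v - b).val + 1 ∨ (u - b).val = 0 ∧ (v - b).val + 1 = s := by
  have := (v - b).isLt
  rw [← sub_add_sub_cancel u v b, Fin.val_add_eq_ite, huv]
  split_ifs <;> omega

lemma cycDist_le_add_one_of_val_sub_eq_one {u v : Fin s} (huv : (u - v).val = 1) (b : Fin s) :
    cycDist u b ≤ cycDist v b + 1 ∧ cycDist v b ≤ cycDist u b + 1 := by
  have := (v - b).isLt
  rcases val_sub_of_val_sub_eq_one huv b with h | h <;> simp only [cycDist] <;> omega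

lemma cycDist_reflect (j b : Fin s) : cycDist (b + (b - j)) b = cycDist j b := by
  have := (j - b).isLt
  rw [cycDist, cycDist, add_sub_cancel_left, ← neg_sub, Fin.val_neg]
  split_ifs with h
  · simp [h]
  · omega

theorem cycleGraph_dist_s12 (hs : 2 ≤ s) (j b : Fin s) : (cycleGraph s).dist j b = cycDist j b := by
  have hone : (1 : Fin s).val = 1 := by rw [Fin.val_one', Nat.mod_eq_of_lt hs]
  refine dist_eq_of_potential (fun j => cycDist j b) ?_ (fun u => cycDist_eq_zero_iff) ?_ j
  · intro u v huv
    rcases cycleGraph_adj'.1 huv with h | h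
    · exact (cycDist_le_add_one_of_val_sub_eq_one h b).1
    · exact (cycDist_le_add_one_of_val_sub_eq_one h b).2
  · intro u hu
    have hlt := (u - b).isLt
    simp only [cycDist] at hu ⊢
    by_cases hk : 2 * (u - b).val ≤ s
    · have huv : (u - (u - 1)).val = 1 := by rw [sub_sub_cancel, hone]
      refine ⟨u - 1, cycleGraph_adj'.2 (Or.inl huv), ?_⟩
      rcases val_sub_of_val_sub_eq_one huv b with h | h <;> omega
    · have huv : (u + 1 - u).val = 1 := by rw [add_sub_cancel_left, hone]
      refine ⟨u + 1, cycleGraph_adj'.2 (Or.inr huv), ?_⟩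
      rcases val_sub_of_val_sub_eq_one huv b with h | h <;> omega

end cycle

abbrev cylinder (r s : ℕ) : SimpleGraph (Fin r × Fin s) := pathGraph r □ cycleGraph s

theorem cylinder_dist {r s : ℕ} (hs : 2 ≤ s) (x y : Fin r × Fin s) :
    (cylinder r s).dist x y = Nat.dist x.1 y.1 + cycDist x.2 y.2 := by
  have : NeZero s := ⟨by omega⟩
  rw [dist_boxProd_of_reachable (pathGraph_preconnected r _ _) (cycleGraph_preconnected _ _),
    pathGraph_dist, cycleGraph_dist_s12 hs]

/-- On the cycle `Fin (2n+1)`, `b + middle n` and `b - middle n` are the two points farthest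
from `b`; on the path `Fin (2n+1)`, `middle n` is the centre. -/
def middle (n : ℕ) : Fin (2 * n + 1) := ⟨n, by omega⟩

@[simp]
lemma val_middle (n : ℕ) : (middle n).val = n := rfl

section oddCycle

variable {h : ℕ}

lemma val_middle_add_one (hh : 0 < h) : (middle h + 1).val = h + 1 := by
  rw [Fin.val_add_one, if_neg (by simp [Fin.ext_iff]; omega), val_middle]

lemma neg_middle : -middle h = middle h + 1 := by
  rcases Nat.eq_zero_or_pos h with rfl | hh
  · exact Subsingleton.elim (α := Fin 1) _ _
  ext
  rw [Fin.val_neg, if_neg (by simp [Fin.ext_iff]; omega), val_middle_add_one hh, val_middle]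
  omega

lemma sub_middle (b : Fin (2 * h + 1)) : b - middle h = b + middle h + 1 := by
  rw [sub_eq_add_neg, neg_middle, add_assoc]

lemma sub_middle_sub_middle (b : Fin (2 * h + 1)) : b - middle h - middle h = b + 1 := by
  rw [sub_middle]
  abel

lemma cycDist_le_of_odd (j b : Fin (2 * h + 1)) : cycDist j b ≤ h := by
  have := (j - b).isLt
  simp only [cycDist]
  omega

lemma cycDist_add_middle (b : Fin (2 * h + 1)) : cycDist (b + middle h) b = h := by
  simp only [cycDist, add_sub_cancel_left, val_middle]
  omega

lemma cycDist_sub_middle (hh : 0 < h) (b : Fin (2 * h + 1)) : cycDist (b - middle h) b = h := by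
  rw [cycDist, sub_sub_cancel_left, neg_middle, val_middle_add_one hh]
  omega

lemma eq_add_middle_or_eq_sub_middle (hh : 0 < h) {j b : Fin (2 * h + 1)}
    (hjb : cycDist j b = h) : j = b + middle h ∨ j = b - middle h := by
  have := (j - b).isLt
  rw [← sub_eq_iff_eq_add', sub_middle, add_assoc, ← sub_eq_iff_eq_add']
  simp only [cycDist] at hjb
  rcases (by omega : (j - b).val = h ∨ (j - b).val = h + 1) with hk | hk
  · exact Or.inl (Fin.ext hk)
  · exact Or.inr (Fin.ext (by rw [hk, val_middle_add_one hh]))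

lemma cycDist_add_middle_ne_sub_middle (hh : 0 < h) {b₁ b₂ : Fin (2 * h + 1)} (hb : b₁ ≠ b₂) :
    cycDist (b₁ + middle h) b₂ ≠ cycDist (b₁ - middle h) b₂ := by
  -- `b₁ - middle h` is the successor of `b₁ + middle h`, and a point and its successor are
  -- equidistant from `b₂` only when the point is `b₂ + middle h`.
  have hone : (b₁ - middle h - (b₁ + middle h)).val = 1 := by
    rw [sub_middle, add_sub_cancel_left, Fin.val_one', Nat.mod_eq_of_lt (by omega)]
  have hne : (b₁ + middle h - b₂).val ≠ h := fun hk =>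
    hb (sub_eq_zero.1 (add_eq_right.1 (by rw [← add_sub_right_comm]; exact Fin.ext hk)))
  have := (b₁ + middle h - b₂).isLt
  intro heq
  simp only [cycDist] at heq
  rcases val_sub_of_val_sub_eq_one hone b₂ with hv | hv <;> omega

lemma eq_of_add_sub_eq {j b : Fin (2 * h + 1)} (hj : b + (b - j) = j) : j = b := by
  have hk : (b - j) + (b - j) = 0 := by
    rw [← sub_eq_zero] at hj
    rw [← hj]
    abel
  have := (b - j).isLt
  have hv := congrArg Fin.val hk
  rw [Fin.val_add_eq_ite, Fin.val_zero] at hv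
  exact (sub_eq_zero.1 (Fin.ext (by rw [Fin.val_zero]; split_ifs at hv <;> omega))).symm

end oddCycle

theorem Fin.forall_of_add_one_closed {n : ℕ} {P : Fin (n + 1) → Prop} {c : Fin (n + 1)}
    (hc : P c) (hstep : ∀ i, P i → P (i + 1)) (j : Fin (n + 1)) : P j := by
  have hshift : ∀ i, P (c + i) := fun i =>
    Fin.induction (by simpa using hc)
      (fun i hi => by rw [← Fin.coeSucc_eq_succ, ← add_assoc]; exact hstep _ hi) i
  simpa using hshift (j - c)

theorem even_ncard_of_involutive {α : Type*} {A : Set α} (hA : A.Finite) {ρ : α → α}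
    (hρ : Function.Involutive ρ) (hmaps : ∀ a ∈ A, ρ a ∈ A) (hfix : ∀ a ∈ A, ρ a ≠ a) :
    Even A.ncard := by
  obtain ⟨t, rfl⟩ := hA.exists_finset_coe
  have hsum : ∑ _a ∈ t, (1 : ZMod 2) = 0 :=
    Finset.sum_involution (fun a _ => ρ a) (fun _ _ => rfl) (fun a ha _ => hfix a ha)
      (fun a ha => hmaps a ha) (fun a _ => hρ a)
  rw [Finset.sum_const, nsmul_one, ZMod.natCast_eq_zero_iff_even] at hsum
  rwa [Set.ncard_coe_finset]

section antiresolving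

variable {V : Type*} {G : SimpleGraph V} {S : Set V}

lemma cls_subset_sphere {x z : V} (hz : z ∈ S) :
    cls G S x ⊆ {y | G.dist y z = G.dist x z} :=
  fun _ hy => (hy.2 z hz).symm

lemma IsKARS.not_cls_subset_pair (hS : IsKARS G 3 S) {x : V} (hx : x ∉ S) (u v : V) :
    ¬cls G S x ⊆ {u, v} := by
  intro hsub
  have h3 := hS.2.2.1 x hx
  have h2 := (Set.ncard_le_ncard hsub).trans (Set.ncard_insert_le u {v})
  rw [Set.ncard_singleton] at h2
  omega

lemma IsKARS.mem_of_sphere_subset_pair (hS : IsKARS G 3 S) {x z : V} (hz : z ∈ S) {u v : V}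
    (hsub : {y | G.dist y z = G.dist x z} ⊆ {u, v}) : x ∈ S :=
  by_contra fun hx => hS.not_cls_subset_pair hx u v ((cls_subset_sphere hz).trans hsub)

lemma IsKARS.even [Finite V] {k : ℕ} (hS : IsKARS G k S) {ρ : V → V}
    (hρ : Function.Involutive ρ) (hρS : ∀ y ∉ S, ρ y ∉ S) (hfix : ∀ y ∉ S, ρ y ≠ y)
    (hdist : ∀ y, ∀ z ∈ S, G.dist (ρ y) z = G.dist y z) : Even k := by
  obtain ⟨x, -, hk⟩ := hS.2.2.2
  rw [← hk]
  exact even_ncard_of_involutive (Set.toFinite _) hρ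
    (fun y hy => ⟨hρS y hy.1, fun z hz => (hy.2 z hz).trans (hdist y z hz).symm⟩)
    (fun y hy => hfix y hy.1)

lemma adim_eq_top_of_forall_not_isKARS {k : ℕ} (h : ∀ S, ¬IsKARS G k S) : adim G k = ⊤ := by
  simp [adim, h]

end antiresolving

section oddCylinder

variable {m h : ℕ} {S : Set (Fin (2 * m + 1) × Fin (2 * h + 1))}

lemma mem_of_far_end (hh : 0 < h) (hS : IsKARS (cylinder (2 * m + 1) (2 * h + 1)) 3 S)
    {a e : Fin (2 * m + 1)} (hae : a.val < m ∧ e = Fin.last _ ∨ m < a.val ∧ e = 0)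
    {b : Fin (2 * h + 1)} (hab : (a, b) ∈ S) {c : Fin (2 * h + 1)} (hc : cycDist c b = h) :
    (e, c) ∈ S := by
  refine hS.mem_of_sphere_subset_pair (u := (e, b + middle h)) (v := (e, b - middle h)) hab ?_
  intro y hy
  simp only [Set.mem_ofPred_eq, cylinder_dist (by omega : 2 ≤ 2 * h + 1), hc] at hy
  have := cycDist_le_of_odd y.2 b
  have := y.1.isLt
  have h1 : y.1 = e := by
    rcases hae with ⟨ha, rfl⟩ | ⟨ha, rfl⟩ <;> ext <;>
      simp only [Nat.dist, Fin.val_last, Fin.val_zero] at hy ⊢ <;> omega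
  rw [h1, add_right_inj] at hy
  rcases eq_add_middle_or_eq_sub_middle hh hy with h2 | h2
  · exact Or.inl (Prod.ext h1 h2)
  · exact Or.inr (Prod.ext h1 h2)

lemma end_rows_mem (hm : 0 < m) (hh : 0 < h)
    (hS : IsKARS (cylinder (2 * m + 1) (2 * h + 1)) 3 S) {c : Fin (2 * h + 1)} (hc : (0, c) ∈ S)
    (j : Fin (2 * h + 1)) : (0, j) ∈ S ∧ (Fin.last (2 * m), j) ∈ S := by
  have to_last : ∀ c, (0, c) ∈ S → ∀ d, cycDist d c = h → (Fin.last (2 * m), d) ∈ S :=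
    fun c hc d hd => mem_of_far_end hh hS (Or.inl ⟨by simp; omega, rfl⟩) hc hd
  have to_first : ∀ c, (Fin.last (2 * m), c) ∈ S → ∀ d, cycDist d c = h → (0, d) ∈ S :=
    fun c hc d hd => mem_of_far_end hh hS (Or.inr ⟨by simp; omega, rfl⟩) hc hd
  have first_row : ∀ j, (0, j) ∈ S := by
    refine Fin.forall_of_add_one_closed hc fun c hc => ?_
    rw [← sub_middle_sub_middle]
    exact to_first _ (to_last c hc _ (cycDist_sub_middle hh c)) _ (cycDist_sub_middle hh _)
  refine ⟨first_row j, to_last _ (first_row (j - middle h)) j ?_⟩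
  simpa using cycDist_add_middle (j - middle h)

theorem not_isKARS_of_mem_ne_middle (hm : 0 < m) (hh : 0 < h)
    (hS : IsKARS (cylinder (2 * m + 1) (2 * h + 1)) 3 S) {z : Fin (2 * m + 1) × Fin (2 * h + 1)}
    (hz : z ∈ S) (hzm : z.1 ≠ middle m) : False := by
  obtain ⟨c, hc⟩ : ∃ c, (0, c) ∈ S := by
    have hzm : z.1.val ≠ m := fun h' => hzm (Fin.ext h')
    rcases Nat.lt_or_gt_of_ne hzm with hlt | hgt
    · have := mem_of_far_end hh hS (Or.inl ⟨hlt, rfl⟩) hz (cycDist_add_middle z.2)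
      exact ⟨_, mem_of_far_end hh hS (Or.inr ⟨by simp; omega, rfl⟩) this
        (cycDist_add_middle _)⟩
    · exact ⟨_, mem_of_far_end hh hS (Or.inr ⟨hgt, rfl⟩) hz (cycDist_add_middle z.2)⟩
  obtain ⟨x, hx⟩ := hS.2.1
  refine hS.not_cls_subset_pair hx x x fun y hy => ?_
  have e₀ := hy.2 _ (end_rows_mem hm hh hS hc x.2).1
  have e₁ := hy.2 _ (end_rows_mem hm hh hS hc x.2).2
  simp only [cylinder_dist (by omega : 2 ≤ 2 * h + 1), cycDist_self, Nat.dist, Fin.val_last,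
    Fin.val_zero] at e₀ e₁
  have := x.1.isLt
  have := y.1.isLt
  have hy₂ : cycDist y.2 x.2 = 0 := by omega
  exact Or.inl (Prod.ext (Fin.ext (by omega)) (cycDist_eq_zero_iff.1 hy₂))

theorem not_isKARS_of_two_in_middle (hm : 0 < m) (hh : 0 < h)
    (hS : IsKARS (cylinder (2 * m + 1) (2 * h + 1)) 3 S) (hmid : ∀ z ∈ S, z.1 = middle m)
    {z₁ z₂ : Fin (2 * m + 1) × Fin (2 * h + 1)} (hz₁ : z₁ ∈ S) (hz₂ : z₂ ∈ S)
    (hne : z₁.2 ≠ z₂.2) : False := by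
  have hx : (0, z₁.2 + middle h) ∉ S := fun hx => by
    simpa using (hm.ne (congrArg Fin.val (hmid _ hx)))
  refine hS.not_cls_subset_pair hx (0, z₁.2 + middle h) (Fin.last (2 * m), z₁.2 + middle h)
    fun y hy => ?_
  have e₁ := hy.2 _ hz₁
  have e₂ := hy.2 _ hz₂
  simp only [cylinder_dist (by omega : 2 ≤ 2 * h + 1), hmid _ hz₁, hmid _ hz₂,
    cycDist_add_middle] at e₁ e₂
  have := cycDist_le_of_odd y.2 z₁.2
  have := y.1.isLt
  simp only [Nat.dist, val_middle, Fin.val_zero] at e₁ e₂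
  have hy₂ : y.2 = z₁.2 + middle h := by
    refine (eq_add_middle_or_eq_sub_middle hh (by omega)).resolve_right fun h₂ => ?_
    exact cycDist_add_middle_ne_sub_middle hh hne (by rw [← h₂]; omega)
  rcases (by omega : y.1.val = 0 ∨ y.1.val = 2 * m) with h₁ | h₁
  · exact Or.inl (Prod.ext (Fin.ext h₁) hy₂)
  · exact Or.inr (Prod.ext (Fin.ext h₁) hy₂)

theorem not_isKARS_of_subsingleton (hh : 0 < h)
    (hS : IsKARS (cylinder (2 * m + 1) (2 * h + 1)) 3 S) {b : Fin (2 * h + 1)}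
    (hSb : ∀ z ∈ S, z = (middle m, b)) : False := by
  obtain ⟨z, hz⟩ := hS.1
  have hcentre : (middle m, b) ∈ S := hSb z hz ▸ hz
  let ρ : Fin (2 * m + 1) × Fin (2 * h + 1) → Fin (2 * m + 1) × Fin (2 * h + 1) :=
    fun y => (y.1.rev, b + (b - y.2))
  have hρ : Function.Involutive ρ := fun y => Prod.ext (Fin.rev_rev _) (by simp only [ρ]; abel)
  have hρ_eq_iff : ∀ y, ρ y = y ↔ y = (middle m, b) := by
    intro y
    simp only [ρ, Prod.ext_iff, Fin.ext_iff, Fin.val_rev, val_middle]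
    refine ⟨fun ⟨h₁, h₂⟩ => ⟨by omega, Fin.val_eq_of_eq (eq_of_add_sub_eq (Fin.ext h₂))⟩, ?_⟩
    rintro ⟨h₁, h₂⟩
    rw [Fin.ext h₂, sub_self, add_zero]
    exact ⟨by omega, rfl⟩
  have hρS : ∀ y ∉ S, ρ y ∉ S := fun y hy hρy =>
    hy (by rw [← hρ y, hSb _ hρy, (hρ_eq_iff _).2 rfl]; exact hcentre)
  have hdist : ∀ y, ∀ z ∈ S, (cylinder (2 * m + 1) (2 * h + 1)).dist (ρ y) z =
      (cylinder (2 * m + 1) (2 * h + 1)).dist y z := by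
    intro y z hz
    rw [hSb z hz, cylinder_dist (by omega), cylinder_dist (by omega)]
    simp only [ρ, cycDist_reflect, Nat.dist, Fin.val_rev, val_middle]
    omega
  exact Nat.not_even_iff_odd.2 (by decide) (hS.even hρ hρS
    (fun y hy hρy => hy ((hρ_eq_iff y).1 hρy ▸ hcentre)) hdist)

theorem not_isKARS_three (hm : 0 < m) (hh : 0 < h)
    (S : Set (Fin (2 * m + 1) × Fin (2 * h + 1))) :
    ¬IsKARS (cylinder (2 * m + 1) (2 * h + 1)) 3 S := by
  intro hS
  by_cases hoff : ∃ z ∈ S, z.1 ≠ middle m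
  · obtain ⟨z, hz, hzm⟩ := hoff
    exact not_isKARS_of_mem_ne_middle hm hh hS hz hzm
  push Not at hoff
  obtain ⟨z, hz⟩ := hS.1
  by_cases htwo : ∃ z' ∈ S, z.2 ≠ z'.2
  · obtain ⟨z', hz', hne⟩ := htwo
    exact not_isKARS_of_two_in_middle hm hh hS hoff hz hz' hne
  push Not at htwo
  exact not_isKARS_of_subsingleton hh hS fun z' hz' => Prod.ext (hoff z' hz') (htwo z' hz').symm

end oddCylinder

/-- For odd `r, s` with `r ≥ 2`, `s ≥ 3`, the cylinder `P_r □ C_s` has no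
3-antiresolving set, i.e. `adim_3(P_r □ C_s) = +∞`. -/
theorem stmt12 (r s : ℕ) (hr : 2 ≤ r) (hs : 3 ≤ s) (hro : Odd r) (hso : Odd s) :
    (¬∃ S : Set (Fin r × Fin s), IsKARS ((pathGraph r).boxProd (cycleGraph s)) 3 S) ∧
    adim ((pathGraph r).boxProd (cycleGraph s)) 3 = ⊤ := by
  obtain ⟨m, rfl⟩ := hro
  obtain ⟨h, rfl⟩ := hso
  have hnot := not_isKARS_three (m := m) (h := h) (by omega) (by omega)
  exact ⟨fun ⟨S, hS⟩ => hnot S hS, adim_eq_top_of_forall_not_isKARS hnot⟩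
end

section
/- For r ≥ 4, adim_2(K_r □ K_r) = 2, realized by S = {(u_1,v_1),(u_2,v_2)}, whose equal-distance relation has the class {(u_1,v_2),(u_2,v_1)} of size 2 as a minimum class. -/
/-!
In the rook's graph `K_r □ K_r` the distance is the Hamming distance on pairs. For a singleton
`{s}` the class of `x ≠ s` is the sphere around `s` through `x`, which contains a whole line
through `x` minus `s`; so it has at least `r - 1 ≥ 3` elements and no singleton is a 2-ARS.
For the two diagonal squares `S = {(p,p), (q,q)}`, reflection in the diagonal preserves the
distances to `S`, so an off-diagonal square shares its class with its mirror image; a diagonal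
square `(a,a) ∉ S` is at distance 2 from both points of `S`, as is `(a,c)` for any
`c ∉ {a, p, q}`, which exists as `r ≥ 4`. Finally the class of `(p,q)` is exactly
`{(p,q), (q,p)}`, the only squares at distance 1 from both points of `S`.
-/

open SimpleGraph

namespace SimpleGraph

abbrev rookGraph (α β : Type*) : SimpleGraph (α × β) :=
  (⊤ : SimpleGraph α) □ (⊤ : SimpleGraph β)

lemma rookGraph_dist {α β : Type*} [DecidableEq α] [DecidableEq β] (x y : α × β) :
    (rookGraph α β).dist x y = (if x.1 = y.1 then 0 else 1) + (if x.2 = y.2 then 0 else 1) := by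
  rw [dist, edist_boxProd, edist_top, edist_top]
  split_ifs <;> rfl

end SimpleGraph

lemma exists_ne_of_four_le_natCard {α : Type*} [Finite α] (h4 : 4 ≤ Nat.card α) (a p q : α) :
    ∃ c, c ≠ a ∧ c ≠ p ∧ c ≠ q := by
  have hlt : ({a, p, q} : Set α).ncard < (Set.univ : Set α).ncard := by
    have := Set.ncard_insert_le a {p, q}
    have := Set.ncard_insert_le p {q}
    rw [Set.ncard_singleton] at this
    rw [Set.ncard_univ]
    omega
  obtain ⟨c, -, hc⟩ := Set.exists_mem_notMem_of_ncard_lt_ncard hlt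
  simp only [Set.mem_insert_iff, Set.mem_singleton_iff, not_or] at hc
  exact ⟨c, hc⟩

section Antiresolving

variable {V : Type*} {G : SimpleGraph V} {S : Set V} {k : ℕ}

lemma self_mem_cls {x : V} (hx : x ∉ S) : x ∈ cls G S x :=
  ⟨hx, fun _ _ => rfl⟩

lemma adim_le_ncard (hS : IsKARS G k S) : adim G k ≤ S.ncard :=
  sInf_le ⟨S, hS, rfl⟩

lemma two_le_adim_of_forall_not_isKARS_singleton [Finite V] (h : ∀ s, ¬IsKARS G k {s}) :
    2 ≤ adim G k := by
  refine le_sInf ?_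
  rintro _ ⟨S, hS, rfl⟩
  have hpos : 0 < S.ncard := (Set.ncard_pos).2 hS.1
  have hne_one : S.ncard ≠ 1 := by
    intro h1
    obtain ⟨s, rfl⟩ := Set.ncard_eq_one.mp h1
    exact h s hS
  show (2 : ℕ∞) ≤ S.ncard
  exact_mod_cast (by omega : 2 ≤ S.ncard)

end Antiresolving

namespace SimpleGraph.rookGraph

variable {α : Type*} [DecidableEq α]

lemma card_sub_one_le_ncard_cls_singleton [Finite α] {s x : α × α} (hx : x ≠ s) :
    Nat.card α - 1 ≤ (cls (rookGraph α α) {s} x).ncard := by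
  obtain ⟨a, b⟩ := x
  have hcompl (c : α) : ({c}ᶜ : Set α).ncard = Nat.card α - 1 := by
    rw [Set.ncard_compl, Set.ncard_singleton]
  by_cases hb : b = s.2
  · have ha : a ≠ s.1 := fun ha => hx (Prod.ext ha hb)
    calc Nat.card α - 1 = ((fun t => (t, b)) '' {s.1}ᶜ).ncard := by
          rw [Set.ncard_image_of_injective _ (Prod.mk_left_injective b), hcompl]
      _ ≤ _ := Set.ncard_le_ncard ?_
    rintro _ ⟨t, ht, rfl⟩
    simp_all [cls, sameDists, rookGraph_dist, Prod.ext_iff]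
  · calc Nat.card α - 1 = ((fun t => (a, t)) '' {s.2}ᶜ).ncard := by
          rw [Set.ncard_image_of_injective _ (Prod.mk_right_injective a), hcompl]
      _ ≤ _ := Set.ncard_le_ncard ?_
    rintro _ ⟨t, ht, rfl⟩
    simp_all [cls, sameDists, rookGraph_dist, Prod.ext_iff]

lemma not_isKARS_singleton [Finite α] (h4 : 4 ≤ Nat.card α) (s : α × α) :
    ¬IsKARS (rookGraph α α) 2 {s} := by
  rintro ⟨-, -, -, x, hx, hcard⟩
  have := card_sub_one_le_ncard_cls_singleton (Set.notMem_singleton_iff.mp hx)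
  omega

lemma swap_mem_cls_of_forall_diag {S : Set (α × α)} (hS : ∀ z ∈ S, z.1 = z.2) {x : α × α}
    (hx : x ∉ S) : x.swap ∈ cls (rookGraph α α) S x := by
  refine ⟨fun hxS => ?_, fun z hz => ?_⟩
  · have hswap : x.swap = x := Prod.ext (hS _ hxS) (hS _ hxS).symm
    exact hx (hswap ▸ hxS)
  · obtain ⟨c, d⟩ := z
    obtain rfl : c = d := hS _ hz
    simp only [rookGraph_dist, Prod.fst_swap, Prod.snd_swap]
    exact add_comm _ _

variable {p q : α}

lemma mk_mem_cls_pair {a c : α} (hap : a ≠ p) (haq : a ≠ q) (hcp : c ≠ p) (hcq : c ≠ q) :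
    (a, c) ∈ cls (rookGraph α α) {(p, p), (q, q)} (a, a) := by
  simp_all [cls, sameDists, rookGraph_dist]

lemma two_le_ncard_cls_pair [Finite α] (h4 : 4 ≤ Nat.card α) {x : α × α}
    (hx : x ∉ ({(p, p), (q, q)} : Set (α × α))) :
    2 ≤ (cls (rookGraph α α) {(p, p), (q, q)} x).ncard := by
  suffices ∃ y ∈ cls (rookGraph α α) {(p, p), (q, q)} x, y ≠ x by
    obtain ⟨y, hy, hyx⟩ := this
    exact (Set.one_lt_ncard).2 ⟨y, hy, x, self_mem_cls hx, hyx⟩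
  obtain ⟨a, b⟩ := x
  by_cases hab : a = b
  · subst hab
    have hap : a ≠ p := by rintro rfl; simp at hx
    have haq : a ≠ q := by rintro rfl; simp at hx
    obtain ⟨c, hca, hcp, hcq⟩ := exists_ne_of_four_le_natCard h4 a p q
    exact ⟨(a, c), mk_mem_cls_pair hap haq hcp hcq, by simpa using hca⟩
  · refine ⟨(b, a), swap_mem_cls_of_forall_diag ?_ hx, fun h => hab (Prod.ext_iff.1 h).2⟩
    simp

lemma cls_pair_offDiag (hpq : p ≠ q) :
    cls (rookGraph α α) {(p, p), (q, q)} (p, q) = {(p, q), (q, p)} := by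
  ext ⟨a, b⟩
  simp only [cls, sameDists, rookGraph_dist, Set.mem_insert_iff, Set.mem_singleton_iff,
    forall_eq_or_imp, forall_eq, Prod.mk.injEq]
  by_cases ha : a = p <;> by_cases hb : b = q <;> by_cases ha' : a = q <;>
    by_cases hb' : b = p <;> simp_all [eq_comm]

lemma isKARS_pair [Finite α] (h4 : 4 ≤ Nat.card α) (hpq : p ≠ q) :
    IsKARS (rookGraph α α) 2 {(p, p), (q, q)} := by
  have hpq_notMem : (p, q) ∉ ({(p, p), (q, q)} : Set (α × α)) := by simp [hpq, hpq.symm]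
  refine ⟨Set.insert_nonempty _ _, ⟨_, hpq_notMem⟩, fun x hx => two_le_ncard_cls_pair h4 hx,
    (p, q), hpq_notMem, ?_⟩
  rw [cls_pair_offDiag hpq, Set.ncard_pair (by simp [hpq])]

end SimpleGraph.rookGraph

/-- For `r ≥ 4`, `adim_2(K_r □ K_r) = 2`, realized by `S = {(u_1,v_1), (u_2,v_2)}`,
whose equal-distance relation has the class `{(u_1,v_2), (u_2,v_1)}` of size 2 as a
minimum class. -/
theorem stmt18 (r : ℕ) (hr : 4 ≤ r) :
    adim ((⊤ : SimpleGraph (Fin r)).boxProd (⊤ : SimpleGraph (Fin r))) 2 = 2 ∧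
    IsKARS ((⊤ : SimpleGraph (Fin r)).boxProd (⊤ : SimpleGraph (Fin r))) 2
      ({(⟨0, by omega⟩, ⟨0, by omega⟩), (⟨1, by omega⟩, ⟨1, by omega⟩)} :
        Set (Fin r × Fin r)) ∧
    cls ((⊤ : SimpleGraph (Fin r)).boxProd (⊤ : SimpleGraph (Fin r)))
      ({(⟨0, by omega⟩, ⟨0, by omega⟩), (⟨1, by omega⟩, ⟨1, by omega⟩)} :
        Set (Fin r × Fin r)) ((⟨0, by omega⟩, ⟨1, by omega⟩)) =
      {(⟨0, by omega⟩, ⟨1, by omega⟩), (⟨1, by omega⟩, ⟨0, by omega⟩)} := by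
  have h4 : 4 ≤ Nat.card (Fin r) := by simpa using hr
  have hpq : (⟨0, by omega⟩ : Fin r) ≠ ⟨1, by omega⟩ := by simp [Fin.ext_iff]
  have hS := rookGraph.isKARS_pair h4 hpq
  refine ⟨le_antisymm ?_ (two_le_adim_of_forall_not_isKARS_singleton
    (rookGraph.not_isKARS_singleton h4)), hS, rookGraph.cls_pair_offDiag hpq⟩
  calc adim _ 2 ≤ _ := adim_le_ncard hS
    _ = 2 := by rw [Set.ncard_pair (by simp [hpq])]; rfl
end
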